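/- Let {Λ_i}_{i∈I} and {Γ_i}_{i∈I} be g-Bessel sequences for Hilbert C*-modules U₁ and U₂ with g-Bessel bounds B₁ and B₂ respectively, where Λ_i and Γ_i map into the same modules V_i. Then the family {Λ_i*Γ_i}_{i∈I} is a g-Bessel sequence for U₂ with respect to U₁, with bound ‖B₁‖B₂. -/

import Mathlib

/-!
If `Λ` has pointwise bound `⟪Λ u, Λ u⟫ ≤ B ⟪u, u⟫` with `B > 0`, so does its adjoint `Λ*`: for
`u = Λ* v` one has `⟪Λ u, v⟫ = ⟪u, u⟫`, and expanding `0 ≤ ⟪Λ u - B v, Λ u - B v⟫` gives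
`B ⟪u, u⟫ ≤ B² ⟪v, v⟫`. Hence `⟪Λᵢ* Γᵢ x, Λᵢ* Γᵢ x⟫ ≤ B₁ ⟪Γᵢ x, Γᵢ x⟫` termwise, and the series
of the left-hand sides converges by the Cauchy criterion, because `0 ≤ a ≤ b` implies
`‖a‖ ≤ ‖b‖` in a C⋆-algebra.
-/

open scoped InnerProductSpace RightActions

/-- The Hilbert C⋆-module class as it stood in Mathlib of December 2024 (right `A`-action via
`Aᵐᵒᵖ`); Mathlib's `CStarModule` now uses a left action. -/
class CStarModuleOld (A : outParam <| Type*) (E : Type*) [NonUnitalSemiring A] [StarRing A]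
    [Module ℂ A] [AddCommGroup E] [Module ℂ E] [PartialOrder A] [SMul Aᵐᵒᵖ E] [Norm A] [Norm E]
    extends Inner A E where
  inner_add_right {x} {y} {z} : inner x (y + z) = inner x y + inner x z
  inner_self_nonneg {x} : 0 ≤ inner x x
  inner_self {x} : inner x x = 0 ↔ x = 0
  inner_op_smul_right {a : A} {x y : E} : inner x (y <• a) = inner x y * a
  inner_smul_right_complex {z : ℂ} {x} {y} : inner x (z • y) = z • inner x y
  star_inner x y : star (inner x y) = inner y x
  norm_eq_sqrt_norm_inner_self x : ‖x‖ = √‖inner x x‖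

namespace CStarModuleOld

variable {A : Type*} [NonUnitalCStarAlgebra A] [PartialOrder A]
  {E : Type*} [AddCommGroup E] [Module ℂ E] [Norm E] [SMul Aᵐᵒᵖ E] [CStarModuleOld A E]
  {F : Type*} [AddCommGroup F] [Module ℂ F] [Norm F] [SMul Aᵐᵒᵖ F] [CStarModuleOld A F]

theorem inner_sub_right {x y z : E} : ⟪x, y - z⟫_A = ⟪x, y⟫_A - ⟪x, z⟫_A :=
  map_sub (AddMonoidHom.mk' (fun y => ⟪x, y⟫_A) fun _ _ => inner_add_right) y z

theorem inner_sub_left {x y z : E} : ⟪x - y, z⟫_A = ⟪x, z⟫_A - ⟪y, z⟫_A := by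
  rw [← star_inner z, inner_sub_right, star_sub, star_inner, star_inner]

theorem inner_smul_right_real {r : ℝ} {x y : E} : ⟪x, r • y⟫_A = r • ⟪x, y⟫_A := by
  rw [← Complex.coe_smul r y, inner_smul_right_complex, Complex.coe_smul]

theorem inner_smul_left_real {r : ℝ} {x y : E} : ⟪r • x, y⟫_A = r • ⟪x, y⟫_A := by
  rw [← star_inner y, inner_smul_right_real, star_smul, star_trivial, star_inner]

variable [StarOrderedRing A]

theorem inner_self_le_of_adjoint {T : E → F} {S : F → E}
    (hTS : ∀ x v, ⟪T x, v⟫_A = ⟪x, S v⟫_A) {B : ℝ} (hB : 0 < B)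
    (hT : ∀ x, ⟪T x, T x⟫_A ≤ B • ⟪x, x⟫_A) (v : F) : ⟪S v, S v⟫_A ≤ B • ⟪v, v⟫_A := by
  set u := S v
  have hTuv : ⟪T u, v⟫_A = ⟪u, u⟫_A := hTS u v
  have hvTu : ⟪v, T u⟫_A = ⟪u, u⟫_A := by
    rw [← star_inner, hTuv, star_inner]
  have hsq : 0 ≤ ⟪T u, T u⟫_A - B • ⟪u, u⟫_A - (B • ⟪u, u⟫_A - B • B • ⟪v, v⟫_A) := by
    simpa only [inner_sub_left, inner_sub_right, inner_smul_left_real, inner_smul_right_real,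
      smul_sub, hTuv, hvTu] using (inner_self_nonneg : 0 ≤ ⟪T u - B • v, T u - B • v⟫_A)
  refine (smul_le_smul_iff_of_pos_left hB).mp (sub_nonneg.mp ?_)
  calc (0 : A)
      ≤ ⟪T u, T u⟫_A - B • ⟪u, u⟫_A - (B • ⟪u, u⟫_A - B • B • ⟪v, v⟫_A)
        + (B • ⟪u, u⟫_A - ⟪T u, T u⟫_A) := add_nonneg hsq (sub_nonneg.mpr (hT u))
    _ = B • B • ⟪v, v⟫_A - B • ⟪u, u⟫_A := by abel

end CStarModuleOld

theorem CStarAlgebra.summable_of_nonneg_of_le {A : Type*} [NonUnitalCStarAlgebra A]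
    [PartialOrder A] [StarOrderedRing A] {ι : Type*} {f g : ι → A} (hf : ∀ i, 0 ≤ f i)
    (hfg : ∀ i, f i ≤ g i) (hg : Summable g) : Summable f := by
  refine summable_iff_vanishing_norm.mpr fun ε hε => ?_
  obtain ⟨s, hs⟩ := summable_iff_vanishing_norm.mp hg ε hε
  refine ⟨s, fun t ht => lt_of_le_of_lt ?_ (hs t ht)⟩
  exact CStarAlgebra.norm_le_norm_of_nonneg_of_le (Finset.sum_nonneg fun i _ => hf i)
    (Finset.sum_le_sum fun i _ => hfg i)

open CStarModuleOld

section IsGBessel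

variable {A : Type*} [NonUnitalCStarAlgebra A] [PartialOrder A]
  {E : Type*} [AddCommGroup E] [Module ℂ E] [Norm E] [SMul Aᵐᵒᵖ E] [CStarModuleOld A E]
  {ι : Type*} {V : ι → Type*} [∀ i, AddCommGroup (V i)] [∀ i, Module ℂ (V i)] [∀ i, Norm (V i)]
  [∀ i, SMul Aᵐᵒᵖ (V i)] [∀ i, CStarModuleOld A (V i)]
  {F : Type*} [AddCommGroup F] [Module ℂ F] [Norm F] [SMul Aᵐᵒᵖ F] [CStarModuleOld A F]

def IsGBessel (Λ : ∀ i, E → V i) (B : ℝ) : Prop :=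
  ∀ x, Summable (fun i => ⟪Λ i x, Λ i x⟫_A) ∧ ∑' i, ⟪Λ i x, Λ i x⟫_A ≤ B • ⟪x, x⟫_A

variable [StarOrderedRing A] {Λ : ∀ i, E → V i} {B : ℝ}

theorem IsGBessel.inner_self_le (hΛ : IsGBessel Λ B) (i : ι) (x : E) :
    ⟪Λ i x, Λ i x⟫_A ≤ B • ⟪x, x⟫_A :=
  ((hΛ x).1.le_tsum i fun _ _ => inner_self_nonneg).trans (hΛ x).2

theorem IsGBessel.of_inner_self_le {W : ι → Type*} [∀ i, AddCommGroup (W i)]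
    [∀ i, Module ℂ (W i)] [∀ i, Norm (W i)] [∀ i, SMul Aᵐᵒᵖ (W i)] [∀ i, CStarModuleOld A (W i)]
    {Φ : ∀ i, E → W i} (hΛ : IsGBessel Λ B) {C : ℝ} (hC : 0 ≤ C)
    (hΦ : ∀ i x, ⟪Φ i x, Φ i x⟫_A ≤ C • ⟪Λ i x, Λ i x⟫_A) : IsGBessel Φ (C * B) := by
  intro x
  obtain ⟨hsum, hle⟩ := hΛ x
  have hCsum := hsum.const_smul C
  have hΦsum : Summable fun i => ⟪Φ i x, Φ i x⟫_A :=
    CStarAlgebra.summable_of_nonneg_of_le (fun _ => inner_self_nonneg) (hΦ · x) hCsum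
  refine ⟨hΦsum, ?_⟩
  calc ∑' i, ⟪Φ i x, Φ i x⟫_A
      ≤ ∑' i, C • ⟪Λ i x, Λ i x⟫_A := hΦsum.tsum_le_tsum (hΦ · x) hCsum
    _ = C • ∑' i, ⟪Λ i x, Λ i x⟫_A := hsum.tsum_const_smul C
    _ ≤ C • B • ⟪x, x⟫_A := smul_le_smul_of_nonneg_left hle hC
    _ = (C * B) • ⟪x, x⟫_A := smul_smul C B _

theorem IsGBessel.adjoint_comp {Λad : ∀ i, V i → E}
    (hΛadj : ∀ i x v, ⟪Λ i x, v⟫_A = ⟪x, Λad i v⟫_A) (hΛ : IsGBessel Λ B) (hB : 0 < B)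
    {Γ : ∀ i, F → V i} {B' : ℝ} (hΓ : IsGBessel Γ B') :
    IsGBessel (fun i => Λad i ∘ Γ i) (B * B') :=
  hΓ.of_inner_self_le hB.le fun i x =>
    inner_self_le_of_adjoint (hΛadj i) hB (hΛ.inner_self_le i) (Γ i x)

end IsGBessel

theorem gBessel_comp_general
    {A : Type*} [CStarAlgebra A] [PartialOrder A] [StarOrderedRing A]
    {U₁ : Type*} [NormedAddCommGroup U₁] [NormedSpace ℂ U₁] [SMul Aᵐᵒᵖ U₁] [CStarModuleOld A U₁]
    {U₂ : Type*} [NormedAddCommGroup U₂] [NormedSpace ℂ U₂] [SMul Aᵐᵒᵖ U₂] [CStarModuleOld A U₂]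
    {ι : Type*} {V : ι → Type*} [∀ i, NormedAddCommGroup (V i)] [∀ i, NormedSpace ℂ (V i)]
    [∀ i, SMul Aᵐᵒᵖ (V i)] [∀ i, CStarModuleOld A (V i)]
    (Λ : ∀ i, U₁ →L[ℂ] V i) (Λad : ∀ i, V i →L[ℂ] U₁)
    (hΛadj : ∀ (i) (x : U₁) (v : V i), ⟪Λ i x, v⟫_A = ⟪x, Λad i v⟫_A)
    (Γ : ∀ i, U₂ →L[ℂ] V i)
    (B₁ B₂ : ℝ) (hB₁ : 0 < B₁)
    (hΛsum : ∀ x : U₁, Summable fun i => ⟪Λ i x, Λ i x⟫_A)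
    (hΛ : ∀ x : U₁, (∑' i, ⟪Λ i x, Λ i x⟫_A) ≤ B₁ • ⟪x, x⟫_A)
    (hΓsum : ∀ x : U₂, Summable fun i => ⟪Γ i x, Γ i x⟫_A)
    (hΓ : ∀ x : U₂, (∑' i, ⟪Γ i x, Γ i x⟫_A) ≤ B₂ • ⟪x, x⟫_A) :
    ∀ x : U₂,
      (Summable fun i => ⟪Λad i (Γ i x), Λad i (Γ i x)⟫_A) ∧
      (∑' i, ⟪Λad i (Γ i x), Λad i (Γ i x)⟫_A) ≤ (‖B₁‖ * B₂) • ⟪x, x⟫_A := by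
  have hΛB : IsGBessel (fun i => ⇑(Λ i)) B₁ := fun x => ⟨hΛsum x, hΛ x⟩
  have hΓB : IsGBessel (fun i => ⇑(Γ i)) B₂ := fun x => ⟨hΓsum x, hΓ x⟩
  rw [Real.norm_of_nonneg hB₁.le]
  exact IsGBessel.adjoint_comp hΛadj hΛB hB₁ hΓB

/-- If `{Λ i}` and `{Γ i}` are g-Bessel sequences for Hilbert
C⋆-modules `U₁` and `U₂` (into the same modules `V i`) with g-Bessel bounds `B₁`, `B₂`,
then `{Λᵢ⋆ Γᵢ}` is a g-Bessel sequence for `U₂` with respect to `U₁`,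
with bound `‖B₁‖ B₂`. -/
theorem gBessel_comp
    {A : Type*} [CStarAlgebra A] [PartialOrder A] [StarOrderedRing A]
    {U₁ : Type*} [NormedAddCommGroup U₁] [NormedSpace ℂ U₁] [SMul Aᵐᵒᵖ U₁] [CStarModuleOld A U₁]
    {U₂ : Type*} [NormedAddCommGroup U₂] [NormedSpace ℂ U₂] [SMul Aᵐᵒᵖ U₂] [CStarModuleOld A U₂]
    {ι : Type*} {V : ι → Type*} [∀ i, NormedAddCommGroup (V i)] [∀ i, NormedSpace ℂ (V i)]
    [∀ i, SMul Aᵐᵒᵖ (V i)] [∀ i, CStarModuleOld A (V i)]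
    (Λ : ∀ i, U₁ →L[ℂ] V i) (Λad : ∀ i, V i →L[ℂ] U₁)
    (hΛadj : ∀ (i) (x : U₁) (v : V i), ⟪Λ i x, v⟫_A = ⟪x, Λad i v⟫_A)
    (Γ : ∀ i, U₂ →L[ℂ] V i) (Γad : ∀ i, V i →L[ℂ] U₂)
    (hΓadj : ∀ (i) (x : U₂) (v : V i), ⟪Γ i x, v⟫_A = ⟪x, Γad i v⟫_A)
    (B₁ B₂ : ℝ) (hB₁ : 0 < B₁) (hB₂ : 0 < B₂)
    (hΛsum : ∀ x : U₁, Summable fun i => ⟪Λ i x, Λ i x⟫_A)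
    (hΛ : ∀ x : U₁, (∑' i, ⟪Λ i x, Λ i x⟫_A) ≤ B₁ • ⟪x, x⟫_A)
    (hΓsum : ∀ x : U₂, Summable fun i => ⟪Γ i x, Γ i x⟫_A)
    (hΓ : ∀ x : U₂, (∑' i, ⟪Γ i x, Γ i x⟫_A) ≤ B₂ • ⟪x, x⟫_A) :
    ∀ x : U₂,
      (Summable fun i => ⟪Λad i (Γ i x), Λad i (Γ i x)⟫_A) ∧
      (∑' i, ⟪Λad i (Γ i x), Λad i (Γ i x)⟫_A) ≤ (‖B₁‖ * B₂) • ⟪x, x⟫_A :=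
  gBessel_comp_general (A := A) Λ Λad hΛadj Γ B₁ B₂ hB₁ hΛsum hΛ hΓsum hΓ
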